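/- Let k ≥ 2 be an integer and let ξ₁, …, ξ_k be real numbers with |ξ_k| ≤ … ≤ |ξ₁|, and set ξ = ξ₁ + … + ξ_k. Suppose |ξ₂| > 1. Let m : ℝ → ℝ be continuous with m(η) = 1 for |η| ≤ 1, m(η) = e^{|η|} for |η| ≥ 2, and 1 ≤ m(η) ≤ e^{|η|} for all η. Then m(ξ)·∏_{j=1}^{k} m(ξ_j)^{-1} ≤ C for a constant C depending only on k. -/

import Mathlib

/-!
Bounding `m` above by `e^{|η|}` and using `|ξ| ≤ ∑ |ξ_j|` gives `m(ξ) ≤ ∏ e^{|ξ_j|}`, while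
`e^{|η|} ≤ e² m(η)` for every `η`, since `m(η) = e^{|η|}` when `|η| ≥ 2` and
`e^{|η|} ≤ e² ≤ e² m(η)` otherwise. Hence the ratio is at most `e^{2k}`.
-/

open Real Finset

section
variable {m : ℝ → ℝ}

lemma exp_abs_le_exp_two_mul (h_large : ∀ η, 2 ≤ |η| → m η = exp |η|)
    (h_one_le : ∀ η, 1 ≤ m η) (η : ℝ) : exp |η| ≤ exp 2 * m η := by
  rcases le_or_gt 2 |η| with h | h
  · rw [h_large η h]
    exact le_mul_of_one_le_left (exp_pos _).le (one_le_exp zero_le_two)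
  · calc exp |η| ≤ exp 2 := exp_le_exp.2 h.le
      _ ≤ exp 2 * m η := le_mul_of_one_le_right (exp_pos _).le (h_one_le η)

lemma apply_sum_le_prod_exp_abs {ι : Type*} (h_le_exp : ∀ η, m η ≤ exp |η|) (s : Finset ι)
    (ξ : ι → ℝ) : m (∑ j ∈ s, ξ j) ≤ ∏ j ∈ s, exp |ξ j| :=
  calc m (∑ j ∈ s, ξ j) ≤ exp |∑ j ∈ s, ξ j| := h_le_exp _
    _ ≤ exp (∑ j ∈ s, |ξ j|) := exp_le_exp.2 (abs_sum_le_sum_abs _ _)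
    _ = ∏ j ∈ s, exp |ξ j| := exp_sum _ _

lemma apply_sum_mul_prod_inv_le {ι : Type*} (h_large : ∀ η, 2 ≤ |η| → m η = exp |η|)
    (h_bounds : ∀ η, 1 ≤ m η ∧ m η ≤ exp |η|) (s : Finset ι) (ξ : ι → ℝ) :
    m (∑ j ∈ s, ξ j) * ∏ j ∈ s, (m (ξ j))⁻¹ ≤ exp 2 ^ s.card := by
  have h_prod_pos : 0 < ∏ j ∈ s, m (ξ j) :=
    prod_pos fun j _ => one_pos.trans_le (h_bounds _).1
  rw [prod_inv_distrib, ← div_eq_mul_inv, div_le_iff₀ h_prod_pos]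
  calc m (∑ j ∈ s, ξ j) ≤ ∏ j ∈ s, exp |ξ j| :=
        apply_sum_le_prod_exp_abs (fun η => (h_bounds η).2) s ξ
    _ ≤ ∏ j ∈ s, exp 2 * m (ξ j) :=
        prod_le_prod (fun _ _ => (exp_pos _).le) fun j _ =>
          exp_abs_le_exp_two_mul h_large (fun η => (h_bounds η).1) (ξ j)
    _ = exp 2 ^ s.card * ∏ j ∈ s, m (ξ j) := by rw [prod_mul_distrib, prod_const]

end

theorem weight_ratio_bounded_case3 (k : ℕ) (hk : 2 ≤ k) :
    ∃ C : ℝ, 0 < C ∧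
      ∀ (m : ℝ → ℝ), Continuous m →
        (∀ η : ℝ, |η| ≤ 1 → m η = 1) →
        (∀ η : ℝ, 2 ≤ |η| → m η = Real.exp |η|) →
        (∀ η : ℝ, 1 ≤ m η ∧ m η ≤ Real.exp |η|) →
        ∀ (ξ : Fin k → ℝ), (∀ i j : Fin k, i ≤ j → |ξ j| ≤ |ξ i|) →
          1 < |ξ ⟨1, by omega⟩| →
          m (∑ j, ξ j) * ∏ j, (m (ξ j))⁻¹ ≤ C := by
  refine ⟨exp 2 ^ k, by positivity, fun m _ _ h_large h_bounds ξ _ _ => ?_⟩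
  simpa using apply_sum_mul_prod_inv_le h_large h_bounds univ ξ
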